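/- Let k ≥ 2 and fix a (k+1)-colouring of the complete symmetric digraph on ℕ⁺ with colours c₁,...,c_{k+1} such that for every t ∈ {1,...,k} there is no c_t-coloured directed path of length r_t. Then for every i ∈ {1,...,k} there exists a set A ⊆ ℕ⁺ with upper density at least ∏_{t=1}^{i} (1/r_t) such that for every t ∈ {1,...,i}, every vertex of A has at most r_t in-neighbours of colour c_t within A. -/

import Mathlib

open Filter

open scoped Classical in
/-- Upper density of a set of naturals: `limsup |A ∩ {1,...,n}| / n`. -/
noncomputable def upDens (A : Set ℕ) : ℝ :=
  limsup (fun n : ℕ => (((Finset.Icc 1 n).filter (fun m => m ∈ A)).card : ℝ) / n) atTop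

def red : Bool := true
def blue : Bool := false

/-- A finite directed path (list of distinct positive integers) all of whose
consecutive edges have colour `col` under the edge-colouring `c`. -/
def FinPath (c : ℕ → ℕ → Bool) (col : Bool) (l : List ℕ) : Prop :=
  l.Nodup ∧ (∀ v ∈ l, 0 < v) ∧ l.Chain' (fun a b => c a b = col)

/-- An infinite directed path of colour `col` under the edge-colouring `c`. -/
def InfPath (c : ℕ → ℕ → Bool) (col : Bool) (f : ℕ → ℕ) : Prop :=
  Function.Injective f ∧ (∀ j, 0 < f j) ∧ ∀ j, c (f j) (f (j + 1)) = col

/-- There is no directed path of colour `col` with `r` edges (i.e. `r+1` vertices). -/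
def NoPathOfLength (c : ℕ → ℕ → Bool) (col : Bool) (r : ℕ) : Prop :=
  ¬ ∃ l : List ℕ, FinPath c col l ∧ l.length = r + 1

/-- There is a directed path of colour `col` with `k` edges starting at `v`. -/
def PathFrom (c : ℕ → ℕ → Bool) (col : Bool) (v k : ℕ) : Prop :=
  ∃ l : List ℕ, FinPath c col l ∧ l.head? = some v ∧ l.length = k + 1

/-- `v ∈ A_i`: the longest red directed path starting at `v` has exactly `i` edges. -/
def Level (c : ℕ → ℕ → Bool) (v i : ℕ) : Prop :=
  PathFrom c red v i ∧ ¬ PathFrom c red v (i + 1)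

/-- A finite directed path all of whose consecutive edges have colour `col` under
the colouring `c` (colours are naturals `0,...,k`). -/
def FinPathN (c : ℕ → ℕ → ℕ) (col : ℕ) (l : List ℕ) : Prop :=
  l.Nodup ∧ (∀ v ∈ l, 0 < v) ∧ l.Chain' (fun a b => c a b = col)

/-- An infinite directed path of colour `col` under the colouring `c`. -/
def InfPathN (c : ℕ → ℕ → ℕ) (col : ℕ) (f : ℕ → ℕ) : Prop :=
  Function.Injective f ∧ (∀ j, 0 < f j) ∧ ∀ j, c (f j) (f (j + 1)) = col

namespace Stmt14Aux

def PathFromN (c : ℕ → ℕ → ℕ) (col v k : ℕ) : Prop :=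
  ∃ l : List ℕ, FinPathN c col l ∧ l.head? = some v ∧ l.length = k + 1

lemma pathFromN_zero (c : ℕ → ℕ → ℕ) (col : ℕ) {v : ℕ} (hv : 0 < v) :
    PathFromN c col v 0 :=
  ⟨[v], ⟨List.nodup_singleton v, by simpa using hv, List.isChain_singleton v⟩, rfl, rfl⟩

lemma pathFromN_anti {c : ℕ → ℕ → ℕ} {col v : ℕ} {j j' : ℕ}
    (hp : PathFromN c col v j) (hj : j' ≤ j) : PathFromN c col v j' := by
  obtain ⟨l, ⟨hnd, hpos, hch⟩, hhead, hlen⟩ := hp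
  obtain ⟨a, t, rfl⟩ : ∃ a t, l = a :: t := by
    cases l with
    | nil => simp at hhead
    | cons a t => exact ⟨a, t, rfl⟩
  have ha : a = v := by simpa using hhead
  refine ⟨(a :: t).take (j' + 1), ⟨hnd.sublist ((a :: t).take_sublist _),
    fun x hx => hpos x (List.mem_of_mem_take hx), hch.take _⟩, ?_, ?_⟩
  · simp [List.take_succ_cons, ha]
  · rw [List.length_take, hlen]
    omega

open Classical in
noncomputable def levelN (c : ℕ → ℕ → ℕ) (col R v : ℕ) : ℕ :=
  Nat.findGreatest (fun j => PathFromN c col v j) R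

open Classical in
lemma levelN_le (c : ℕ → ℕ → ℕ) (col R v : ℕ) : levelN c col R v ≤ R :=
  Nat.findGreatest_le R

lemma levelN_spec (c : ℕ → ℕ → ℕ) (col R : ℕ) {v : ℕ} (hv : 0 < v) :
    PathFromN c col v (levelN c col R v) := by
  classical
  exact Nat.findGreatest_spec (Nat.zero_le R) (pathFromN_zero c col hv)

lemma levelN_not (c : ℕ → ℕ → ℕ) (col R : ℕ) {v : ℕ}
    (hR : ¬ PathFromN c col v (R + 1)) :
    ¬ PathFromN c col v (levelN c col R v + 1) := by
  classical
  by_cases hle : levelN c col R v + 1 ≤ R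
  · exact Nat.findGreatest_is_greatest (Nat.lt_succ_self _) hle
  · have : levelN c col R v = R := le_antisymm (levelN_le c col R v) (by omega)
    rw [this]; exact hR

lemma card_le_level {c : ℕ → ℕ → ℕ} {col v j : ℕ} (l : List ℕ)
    (hl : FinPathN c col l) (hhead : l.head? = some v) (hlen : l.length = j + 1)
    (S : Finset ℕ)
    (hS : ∀ u ∈ S, 0 < u ∧ u ≠ v ∧ c u v = col ∧ ¬ PathFromN c col u (j + 1)) :
    S.card ≤ j := by
  have hvmem : v ∈ l := by
    cases l with
    | nil => simp at hhead
    | cons a t => simp at hhead; simp [hhead]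
  have hsub : S ⊆ l.toFinset.erase v := by
    intro u hu
    obtain ⟨hu0, huv, hcu, hnp⟩ := hS u hu
    rw [Finset.mem_erase, List.mem_toFinset]
    refine ⟨huv, ?_⟩
    by_contra hul
    apply hnp
    refine ⟨u :: l, ⟨List.nodup_cons.2 ⟨hul, hl.1⟩, ?_, ?_⟩, rfl, by simp [hlen]⟩
    · intro x hx
      rcases List.mem_cons.1 hx with hx | hx
      · exact hx ▸ hu0
      · exact hl.2.1 x hx
    · refine List.isChain_cons.2 ⟨fun y hy => ?_, hl.2.2⟩
      rw [hhead] at hy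
      simp at hy
      rw [← hy]; exact hcu
  calc S.card ≤ (l.toFinset.erase v).card := Finset.card_le_card hsub
    _ = l.toFinset.card - 1 := Finset.card_erase_of_mem (List.mem_toFinset.2 hvmem)
    _ = (j + 1) - 1 := by rw [List.toFinset_card_of_nodup hl.1, hlen]
    _ = j := rfl

open scoped Classical in
noncomputable def dens (A : Set ℕ) (n : ℕ) : ℝ :=
  (((Finset.Icc 1 n).filter (fun m => m ∈ A)).card : ℝ) / n

lemma upDens_eq (A : Set ℕ) : upDens A = limsup (dens A) atTop := rfl

lemma dens_nonneg (A : Set ℕ) (n : ℕ) : 0 ≤ dens A n :=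
  div_nonneg (Nat.cast_nonneg _) (Nat.cast_nonneg _)

open scoped Classical in
lemma dens_le_one (A : Set ℕ) (n : ℕ) : dens A n ≤ 1 := by
  rcases Nat.eq_zero_or_pos n with rfl | hn
  · simp [dens]
  · rw [dens, div_le_one (by exact_mod_cast hn)]
    have : ((Finset.Icc 1 n).filter (fun m => m ∈ A)).card ≤ (Finset.Icc 1 n).card :=
      Finset.card_filter_le _ _
    rw [Nat.card_Icc] at this
    exact_mod_cast this.trans (by omega)

lemma dens_bddAbove (A : Set ℕ) : IsBoundedUnder (· ≤ ·) atTop (dens A) :=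
  isBoundedUnder_of ⟨1, dens_le_one A⟩

lemma dens_bddBelow (A : Set ℕ) : IsBoundedUnder (· ≥ ·) atTop (dens A) :=
  isBoundedUnder_of ⟨0, dens_nonneg A⟩

open scoped Classical in
lemma upDens_pos_set : (1 : ℝ) ≤ upDens {n : ℕ | 0 < n} := by
  rw [upDens_eq]
  have : dens {n : ℕ | 0 < n} =ᶠ[atTop] fun _ => (1 : ℝ) := by
    filter_upwards [eventually_ge_atTop 1] with n hn
    have : (Finset.Icc 1 n).filter (fun m => m ∈ {n : ℕ | 0 < n}) = Finset.Icc 1 n := by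
      apply Finset.filter_true_of_mem
      intro x hx
      simp only [Finset.mem_Icc] at hx
      exact hx.1
    simp only [dens]
    rw [Finset.filter_congr_decidable, this, Nat.card_Icc]
    field_simp
    simp
  rw [limsup_congr this, limsup_const]

lemma limsup_sum_le {ι : Type*} (s : Finset ι) (g : ι → ℕ → ℝ)
    (h0 : ∀ j ∈ s, ∀ n, 0 ≤ g j n) (h1 : ∀ j ∈ s, ∀ n, g j n ≤ 1) :
    limsup (fun n => ∑ j ∈ s, g j n) atTop ≤ ∑ j ∈ s, limsup (g j) atTop := by
  induction s using Finset.cons_induction with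
  | empty => simp [limsup_const]
  | cons a s ha ih =>
    have hbs : IsBoundedUnder (· ≤ ·) atTop (fun n => ∑ j ∈ s, g j n) :=
      isBoundedUnder_of ⟨(s.card : ℝ), fun n => by
        calc ∑ j ∈ s, g j n ≤ ∑ j ∈ s, 1 :=
              Finset.sum_le_sum fun j hj => h1 j (Finset.mem_cons.2 (Or.inr hj)) n
          _ = (s.card : ℝ) := by simp⟩
    have hcs : IsCoboundedUnder (· ≤ ·) atTop (fun n => ∑ j ∈ s, g j n) :=
      IsBoundedUnder.isCoboundedUnder_le
        (isBoundedUnder_of ⟨0, fun n =>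
          Finset.sum_nonneg fun j hj => h0 j (Finset.mem_cons.2 (Or.inr hj)) n⟩)
    have hba : IsBoundedUnder (· ≤ ·) atTop (g a) :=
      isBoundedUnder_of ⟨1, fun n => h1 a (Finset.mem_cons_self a s) n⟩
    have hga : IsBoundedUnder (· ≥ ·) atTop (g a) :=
      isBoundedUnder_of ⟨0, fun n => h0 a (Finset.mem_cons_self a s) n⟩
    have key : limsup (fun n => g a n + ∑ j ∈ s, g j n) atTop ≤
        limsup (g a) atTop + limsup (fun n => ∑ j ∈ s, g j n) atTop :=
      limsup_add_le hga hba hcs hbs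
    simp only [Finset.sum_cons]
    refine key.trans ?_
    have := ih (fun j hj => h0 j (Finset.mem_cons.2 (Or.inr hj)))
      (fun j hj => h1 j (Finset.mem_cons.2 (Or.inr hj)))
    linarith


open scoped Classical in
lemma dens_le_sum {A : Set ℕ} {R : ℕ} {lvl : ℕ → ℕ}
    (hlvl : ∀ v ∈ A, lvl v < R) (n : ℕ) :
    dens A n ≤ ∑ j ∈ Finset.range R, dens (A ∩ {v | lvl v = j}) n := by
  have hcard : ((Finset.Icc 1 n).filter (fun m => m ∈ A)).card ≤
      ∑ j ∈ Finset.range R,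
        ((Finset.Icc 1 n).filter (fun m => m ∈ A ∩ {v | lvl v = j})).card := by
    calc ((Finset.Icc 1 n).filter (fun m => m ∈ A)).card
        ≤ ((Finset.range R).biUnion
            (fun j => (Finset.Icc 1 n).filter (fun m => m ∈ A ∩ {v | lvl v = j}))).card := by
          apply Finset.card_le_card
          intro u hu
          rw [Finset.mem_filter] at hu
          refine Finset.mem_biUnion.2 ⟨lvl u, Finset.mem_range.2 (hlvl u hu.2), ?_⟩
          exact Finset.mem_filter.2 ⟨hu.1, hu.2, rfl⟩
      _ ≤ _ := Finset.card_biUnion_le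
  rcases Nat.eq_zero_or_pos n with rfl | hn
  · simp [dens]
  · have hsum : ∑ j ∈ Finset.range R, dens (A ∩ {v | lvl v = j}) n
        = (∑ j ∈ Finset.range R,
            (((Finset.Icc 1 n).filter (fun m => m ∈ A ∩ {v | lvl v = j})).card : ℝ)) / n := by
      rw [Finset.sum_div]
      refine Finset.sum_congr rfl fun j _ => ?_
      rw [dens, Finset.filter_congr_decidable]
    rw [dens, hsum]
    have hn' : (0:ℝ) < (n:ℝ) := by exact_mod_cast hn
    gcongr
    push_cast
    exact_mod_cast hcard

end Stmt14Aux

open Stmt14Aux in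
/-- Inductive step for many colours: for each `i ∈ {1,...,k}` there is a set `A` of
upper density at least `∏_{t<i} 1/(r t)` in which every vertex has at most `r t`
in-neighbours of colour `t` within `A`, for every `t < i`. -/
theorem stmt14 (k : ℕ) (hk : 2 ≤ k) (c : ℕ → ℕ → ℕ) (hc : ∀ m n, c m n ≤ k)
    (r : ℕ → ℕ)
    (h : ∀ t < k, ¬ ∃ l : List ℕ, FinPathN c t l ∧ l.length = r t + 1)
    (i : ℕ) (hi1 : 1 ≤ i) (hik : i ≤ k) :
    ∃ A : Set ℕ, (∀ a ∈ A, 0 < a) ∧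
      (∏ t ∈ Finset.range i, (1 / (r t : ℝ))) ≤ upDens A ∧
      (∀ t < i, ∀ v ∈ A, ∀ S : Finset ℕ,
        (∀ u ∈ S, u ∈ A ∧ u ≠ v ∧ c u v = t) → S.card ≤ r t) := by
  clear hk hc hi1
  induction i with
  | zero =>
    refine ⟨{n : ℕ | 0 < n}, fun a ha => ha, ?_, ?_⟩
    · simpa using upDens_pos_set
    · intro t ht
      exact absurd ht (Nat.not_lt_zero t)
  | succ i ih =>
    have hik' : i < k := hik
    obtain ⟨A, hA0, hAd, hAnb⟩ := ih (le_of_lt hik')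
    have hR1 : 1 ≤ r i := by
      by_contra hR
      have hR0 : r i = 0 := by omega
      exact h i hik' ⟨[1], ⟨List.nodup_singleton 1, by simp, List.isChain_singleton 1⟩, by simp [hR0]⟩
    have hnotR : ∀ v, ¬ PathFromN c i v (r i) := by
      rintro v ⟨l, hl, _, hlen⟩
      exact h i hik' ⟨l, hl, hlen⟩
    set lvl : ℕ → ℕ := levelN c i (r i - 1) with hlvldef
    have hlvl_lt : ∀ v ∈ A, lvl v < r i := fun v _ =>
      lt_of_le_of_lt (levelN_le c i (r i - 1) v) (by omega)
    have hnot_succ : ∀ v, ¬ PathFromN c i v (lvl v + 1) := by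
      intro v
      apply levelN_not
      have : r i - 1 + 1 = r i := by omega
      rw [this]
      exact hnotR v
    have hdle : ∀ n, dens A n ≤ ∑ j ∈ Finset.range (r i), dens (A ∩ {v | lvl v = j}) n :=
      dens_le_sum hlvl_lt
    have hsum : upDens A ≤ ∑ j ∈ Finset.range (r i), upDens (A ∩ {v | lvl v = j}) := by
      rw [upDens_eq]
      have h1 : limsup (dens A) atTop ≤
          limsup (fun n => ∑ j ∈ Finset.range (r i), dens (A ∩ {v | lvl v = j}) n) atTop := by
        refine limsup_le_limsup (Eventually.of_forall hdle) ?_ ?_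
        · exact (dens_bddBelow A).isCoboundedUnder_le
        · exact isBoundedUnder_of ⟨((r i : ℕ) : ℝ), fun n => by
            calc ∑ j ∈ Finset.range (r i), dens (A ∩ {v | lvl v = j}) n
                ≤ ∑ _j ∈ Finset.range (r i), (1 : ℝ) :=
                  Finset.sum_le_sum fun j _ => dens_le_one _ n
              _ = ((r i : ℕ) : ℝ) := by simp⟩
      refine h1.trans ?_
      have h2 := limsup_sum_le (Finset.range (r i)) (fun j n => dens (A ∩ {v | lvl v = j}) n)
        (fun j _ n => dens_nonneg _ n) (fun j _ n => dens_le_one _ n)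
      refine h2.trans ?_
      apply le_of_eq
      refine Finset.sum_congr rfl fun j _ => ?_
      rw [upDens_eq]
    obtain ⟨j, hj, hjd⟩ : ∃ j ∈ Finset.range (r i),
        upDens A / (r i : ℝ) ≤ upDens (A ∩ {v | lvl v = j}) := by
      apply Finset.exists_le_of_sum_le ⟨0, Finset.mem_range.2 (by omega)⟩
      have heq : ∑ _j ∈ Finset.range (r i), upDens A / (r i : ℝ) = upDens A := by
        rw [Finset.sum_const, Finset.card_range, nsmul_eq_mul]
        field_simp
      rw [heq]
      exact hsum
    refine ⟨A ∩ {v | lvl v = j}, fun a ha => hA0 a ha.1, ?_, ?_⟩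
    · rw [Finset.prod_range_succ]
      have hRpos : (0 : ℝ) < (r i : ℝ) := by exact_mod_cast hR1
      calc (∏ t ∈ Finset.range i, 1 / (r t : ℝ)) * (1 / (r i : ℝ))
          ≤ upDens A * (1 / (r i : ℝ)) := by
            apply mul_le_mul_of_nonneg_right hAd (by positivity)
        _ = upDens A / (r i : ℝ) := by ring
        _ ≤ _ := hjd
    · intro t ht v hv S hS
      rcases Nat.lt_succ_iff_lt_or_eq.1 ht with ht | rfl
      · exact hAnb t ht v hv.1 S (fun u hu =>
          ⟨(hS u hu).1.1, (hS u hu).2.1, (hS u hu).2.2⟩)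
      · have hvj : lvl v = j := hv.2
        obtain ⟨l, hl, hhead, hlen⟩ := levelN_spec c t (r t - 1) (hA0 v hv.1)
        have hcard : S.card ≤ j := by
          refine card_le_level l hl hhead (by rw [hlen, ← hlvldef, hvj]) S ?_
          intro u hu
          obtain ⟨huA, hune, hcuv⟩ := hS u hu
          refine ⟨hA0 u huA.1, hune, hcuv, ?_⟩
          have huj : lvl u = j := huA.2
          have := hnot_succ u
          rwa [huj] at this
        have hjR : j < r t := Finset.mem_range.1 hj
        omega
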